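/- With the carrier S = K[ℏ][x¹,x²,x³] ⊗ Λ(θ⁰,θ¹,θ²) and conventions of the context, define the endomorphisms: L₁ = ℏ∂_{x¹} − √3 θ⁰θ¹ − 12(x¹)² − (3/2)ℏ x²∂_{x¹} − (10/3)ℏ x³∂_{x²} + 2√3 ℏ θ¹∂_{θ⁰} + ℏ θ²∂_{θ¹}; L₂ = ℏ∂_{x²} − (1/2)ℏ x¹∂_{x¹} − (3/2)ℏ x²∂_{x²} − (5/2)ℏ x³∂_{x³} − ℏ θ¹∂_{θ¹} − 2ℏ θ²∂_{θ²} − (3/4)ℏ; L₃ = ℏ∂_{x³} − (16/3)ℏ x¹∂_{x²} − (3/2)ℏ x²∂_{x³} + (√3/2)ℏ θ⁰∂_{θ¹} + 4ℏ θ¹∂_{θ²} + (3/16)ℏ² ∂_{x¹}∂_{x¹} − √3 ℏ² ∂_{θ¹}∂_{θ⁰}; G₁ = ℏ∂_{θ¹} + √3 x¹θ⁰ − (1/2)ℏ θ¹∂_{x¹} + (1/3)ℏ θ²∂_{x²} + 2√3 ℏ x¹∂_{θ⁰} − (3/2)ℏ x²∂_{θ¹} + 5ℏ x³∂_{θ²};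 G₂ = ℏ∂_{θ²} + (√3/8)ℏ θ⁰∂_{x¹} − (4/3)ℏ θ¹∂_{x²} + (1/2)ℏ θ²∂_{x³} + 2ℏ x¹∂_{θ¹} − (3/2)ℏ x²∂_{θ²} + (√3/4)ℏ² ∂_{θ⁰}∂_{x¹}. Then under the identification (l₋, l₀, l₊, q₋, q₊) ↦ (L₁, L₂, L₃, G₁, G₂) these operators form a quadratic super quantum Airy structure representation of the Lie superalgebra osp(1|2) rescaled by ℏ; explicitly: [L₂,L₁] = −ℏL₁, [L₂,L₃] = ℏL₃, [L₃,L₁] = 2ℏL₂, [L₂,G₁] = −(ℏ/2)G₁, [L₂,G₂] = (ℏ/2)G₂, [L₃,G₁] = ℏG₂, [L₁,G₂] = ℏG₁, [L₁,G₁] = 0, [L₃,G₂] = 0, {G₁,G₁} = −ℏL₁, {G₂,G₂} = ℏL₃, and {G₁,G₂} = −ℏL₂. -/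

import Mathlib

/-!
Statement 11: the explicit differential operators `L₁, L₂, L₃, G₁, G₂` on
`S = K[ℏ][x¹,x²,x³] ⊗ Λ(θ⁰,θ¹,θ²)` form a quadratic super quantum Airy structure
representation of the Lie superalgebra `osp(1|2)` rescaled by `ℏ`.
-/

set_option synthInstance.maxHeartbeats 1000000
set_option maxHeartbeats 1000000

noncomputable section
open TensorProduct

variable (K : Type) [Field K] [CharZero K] (s3 : K)

/-- `R = K[ℏ]`. -/
abbrev R := Polynomial K
/-- `ℏ ∈ R`. -/
def hb : R K := Polynomial.X
/-- The even part `P = R[x¹,x²,x³]`; the variable `x^i` has index `i - 1 : Fin 3`. -/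
abbrev Pev := MvPolynomial (Fin 3) (R K)
/-- The odd part `Λ(θ⁰,θ¹,θ²)`; the generator `θ^a` has index `a : Fin 3`. -/
abbrev Podd := ExteriorAlgebra (R K) (Fin 3 →₀ R K)
/-- The full carrier `S = P ⊗_R Λ`. -/
abbrev SuperSpace := Pev K ⊗[R K] Podd K

/-- `∂_{x^{a+1}}`, acting through the polynomial factor. -/
def dX (a : Fin 3) : SuperSpace K → SuperSpace K :=
  LinearMap.rTensor (Podd K) (MvPolynomial.pderiv a).toLinearMap

/-- Multiplication by `x^{a+1}`, acting through the polynomial factor. -/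
def mX (a : Fin 3) : SuperSpace K → SuperSpace K :=
  LinearMap.rTensor (Podd K) (LinearMap.mulLeft (R K) (MvPolynomial.X a))

/-- The generator `θ^a` of the exterior algebra. -/
def thetaGen (a : Fin 3) : Podd K := ExteriorAlgebra.ι (R K) (Finsupp.single a 1)

/-- `∂_{θ^a}` (interior product with the dual basis vector), acting through the odd factor. -/
def dT (a : Fin 3) : SuperSpace K → SuperSpace K :=
  LinearMap.lTensor (Pev K) (CliffordAlgebra.contractLeft (Finsupp.lapply a))

/-- Left multiplication by `θ^a`, acting through the odd factor. -/
def mT (a : Fin 3) : SuperSpace K → SuperSpace K :=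
  LinearMap.lTensor (Pev K) (LinearMap.mulLeft (R K) (thetaGen K a))

/-- A scalar `c : K` viewed in `R = K[ℏ]`. -/
def cs (c : K) : R K := Polynomial.C c

/-- `L₁ = ℏ∂_{x¹} − √3 θ⁰θ¹ − 12(x¹)² − (3/2)ℏ x²∂_{x¹} − (10/3)ℏ x³∂_{x²}
        + 2√3 ℏ θ¹∂_{θ⁰} + ℏ θ²∂_{θ¹}`. -/
def L1 : SuperSpace K → SuperSpace K := fun v =>
  hb K • dX K 0 v - cs K s3 • mT K 0 (mT K 1 v) - (12 : R K) • mX K 0 (mX K 0 v)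
    - (cs K (3/2) * hb K) • mX K 1 (dX K 0 v)
    - (cs K (10/3) * hb K) • mX K 2 (dX K 1 v)
    + (cs K (2 * s3) * hb K) • mT K 1 (dT K 0 v)
    + hb K • mT K 2 (dT K 1 v)

/-- `L₂ = ℏ∂_{x²} − (1/2)ℏ x¹∂_{x¹} − (3/2)ℏ x²∂_{x²} − (5/2)ℏ x³∂_{x³}
        − ℏ θ¹∂_{θ¹} − 2ℏ θ²∂_{θ²} − (3/4)ℏ`. -/
def L2 : SuperSpace K → SuperSpace K := fun v =>
  hb K • dX K 1 v - (cs K (1/2) * hb K) • mX K 0 (dX K 0 v)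
    - (cs K (3/2) * hb K) • mX K 1 (dX K 1 v)
    - (cs K (5/2) * hb K) • mX K 2 (dX K 2 v)
    - hb K • mT K 1 (dT K 1 v) - (2 * hb K) • mT K 2 (dT K 2 v)
    - (cs K (3/4) * hb K) • v

/-- `L₃ = ℏ∂_{x³} − (16/3)ℏ x¹∂_{x²} − (3/2)ℏ x²∂_{x³} + (√3/2)ℏ θ⁰∂_{θ¹} + 4ℏ θ¹∂_{θ²}
        + (3/16)ℏ² ∂_{x¹}∂_{x¹} − √3 ℏ² ∂_{θ¹}∂_{θ⁰}`. -/
def L3 : SuperSpace K → SuperSpace K := fun v =>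
  hb K • dX K 2 v - (cs K (16/3) * hb K) • mX K 0 (dX K 1 v)
    - (cs K (3/2) * hb K) • mX K 1 (dX K 2 v)
    + (cs K (s3/2) * hb K) • mT K 0 (dT K 1 v)
    + (4 * hb K) • mT K 1 (dT K 2 v)
    + (cs K (3/16) * hb K ^ 2) • dX K 0 (dX K 0 v)
    - (cs K s3 * hb K ^ 2) • dT K 1 (dT K 0 v)

/-- `G₁ = ℏ∂_{θ¹} + √3 x¹θ⁰ − (1/2)ℏ θ¹∂_{x¹} + (1/3)ℏ θ²∂_{x²} + 2√3 ℏ x¹∂_{θ⁰}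
        − (3/2)ℏ x²∂_{θ¹} + 5ℏ x³∂_{θ²}`. -/
def G1 : SuperSpace K → SuperSpace K := fun v =>
  hb K • dT K 1 v + cs K s3 • mX K 0 (mT K 0 v)
    - (cs K (1/2) * hb K) • mT K 1 (dX K 0 v)
    + (cs K (1/3) * hb K) • mT K 2 (dX K 1 v)
    + (cs K (2 * s3) * hb K) • mX K 0 (dT K 0 v)
    - (cs K (3/2) * hb K) • mX K 1 (dT K 1 v)
    + (5 * hb K) • mX K 2 (dT K 2 v)

/-- `G₂ = ℏ∂_{θ²} + (√3/8)ℏ θ⁰∂_{x¹} − (4/3)ℏ θ¹∂_{x²} + (1/2)ℏ θ²∂_{x³} + 2ℏ x¹∂_{θ¹}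
        − (3/2)ℏ x²∂_{θ²} + (√3/4)ℏ² ∂_{θ⁰}∂_{x¹}`. -/
def G2 : SuperSpace K → SuperSpace K := fun v =>
  hb K • dT K 2 v + (cs K (s3/8) * hb K) • mT K 0 (dX K 0 v)
    - (cs K (4/3) * hb K) • mT K 1 (dX K 1 v)
    + (cs K (1/2) * hb K) • mT K 2 (dX K 2 v)
    + (2 * hb K) • mX K 0 (dT K 1 v)
    - (cs K (3/2) * hb K) • mX K 1 (dT K 2 v)
    + (cs K (s3/4) * hb K ^ 2) • dT K 0 (dX K 0 v)

/-! ### Auxiliary infrastructure -/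

set_option linter.unusedSectionVars false
set_option linter.unnecessarySeqFocus false

theorem pderiv_comm' {σ R : Type*} [CommSemiring R] (i j : σ) (p : MvPolynomial σ R) :
    MvPolynomial.pderiv i (MvPolynomial.pderiv j p) = MvPolynomial.pderiv j (MvPolynomial.pderiv i p) := by
  classical
  induction p using MvPolynomial.induction_on with
  | C a => simp
  | add p q hp hq => simp [hp, hq]
  | mul_X p n hp =>
      simp only [MvPolynomial.pderiv_mul, MvPolynomial.pderiv_X, Pi.single_apply, map_add, hp]
      split_ifs <;> simp <;> ring

/-- multiplication by `ℏ`, treated as an opaque operator. -/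
def Hh (v : SuperSpace K) : SuperSpace K := hb K • v

namespace St11

variable {K : Type} [Field K] [CharZero K]

/- linear map versions -/
theorem dX_def (a : Fin 3) : dX K a = ⇑(LinearMap.rTensor (Podd K) (MvPolynomial.pderiv a).toLinearMap) := rfl
theorem mX_def (a : Fin 3) : mX K a = ⇑(LinearMap.rTensor (Podd K) (LinearMap.mulLeft (R K) (MvPolynomial.X a))) := rfl
theorem dT_def (a : Fin 3) : dT K a = ⇑(LinearMap.lTensor (Pev K) (CliffordAlgebra.contractLeft (Finsupp.lapply a))) := rfl
theorem mT_def (a : Fin 3) : mT K a = ⇑(LinearMap.lTensor (Pev K) (LinearMap.mulLeft (R K) (thetaGen K a))) := rfl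

/- scalar conversion -/
theorem csmul (c : K) (v : SuperSpace K) : cs K c • v = c • v := by
  rw [cs, ← Polynomial.algebraMap_eq, algebraMap_smul]

theorem cs_hb_smul (c : K) (v : SuperSpace K) : (cs K c * hb K) • v = c • Hh K v := by
  rw [mul_comm, mul_smul, csmul, smul_comm]; rfl

theorem cs_hb2_smul (c : K) (v : SuperSpace K) : (cs K c * hb K ^ 2) • v = c • Hh K (Hh K v) := by
  rw [mul_smul, csmul, sq, mul_smul]; rfl

theorem num_smul (n : ℕ) [n.AtLeastTwo] (v : SuperSpace K) :
    (OfNat.ofNat n : R K) • v = (OfNat.ofNat n : K) • v := by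
  rw [show (OfNat.ofNat n : R K) = cs K (OfNat.ofNat n) from (map_ofNat Polynomial.C n).symm,
    csmul]

theorem num_hb_smul (n : ℕ) [n.AtLeastTwo] (v : SuperSpace K) :
    ((OfNat.ofNat n : R K) * hb K) • v = (OfNat.ofNat n : K) • Hh K v := by
  rw [mul_smul, num_smul]; rfl

theorem twelve_smul (v : SuperSpace K) : (12 : R K) • v = (12 : K) • v := num_smul 12 v
theorem two_hb_smul (v : SuperSpace K) : ((2 : R K) * hb K) • v = (2 : K) • Hh K v :=
  num_hb_smul 2 v
theorem four_hb_smul (v : SuperSpace K) : ((4 : R K) * hb K) • v = (4 : K) • Hh K v :=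
  num_hb_smul 4 v
theorem five_hb_smul (v : SuperSpace K) : ((5 : R K) * hb K) • v = (5 : K) • Hh K v :=
  num_hb_smul 5 v

theorem hb_smul (v : SuperSpace K) : hb K • v = Hh K v := rfl

/- linearity -/
section Lin
variable (a : Fin 3) (c : K) (u w : SuperSpace K)

theorem Hh_add : Hh K (u + w) = Hh K u + Hh K w := smul_add _ _ _
theorem Hh_sub : Hh K (u - w) = Hh K u - Hh K w := smul_sub _ _ _
theorem Hh_neg : Hh K (-u) = -Hh K u := smul_neg (hb K) u
theorem Hh_zero : Hh K (0 : SuperSpace K) = 0 := smul_zero _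
theorem Hh_smul : Hh K (c • u) = c • Hh K u := smul_comm _ _ _

theorem dX_add : dX K a (u + w) = dX K a u + dX K a w := by rw [dX_def]; exact map_add _ _ _
theorem dX_sub : dX K a (u - w) = dX K a u - dX K a w := by rw [dX_def]; exact map_sub (LinearMap.rTensor (Podd K) (MvPolynomial.pderiv a).toLinearMap) u w
theorem dX_neg : dX K a (-u) = -dX K a u := by rw [dX_def]; exact map_neg (LinearMap.rTensor (Podd K) (MvPolynomial.pderiv a).toLinearMap) u
theorem dX_zero : dX K a (0 : SuperSpace K) = 0 := by rw [dX_def]; exact map_zero _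
theorem dX_smul : dX K a (c • u) = c • dX K a u := by rw [dX_def]; exact LinearMap.map_smul_of_tower _ _ _
theorem dX_Hh : dX K a (Hh K u) = Hh K (dX K a u) := by rw [dX_def]; exact map_smul _ _ _

theorem mX_add : mX K a (u + w) = mX K a u + mX K a w := by rw [mX_def]; exact map_add _ _ _
theorem mX_sub : mX K a (u - w) = mX K a u - mX K a w := by rw [mX_def]; exact map_sub (LinearMap.rTensor (Podd K) (LinearMap.mulLeft (R K) (MvPolynomial.X a))) u w
theorem mX_neg : mX K a (-u) = -mX K a u := by rw [mX_def]; exact map_neg (LinearMap.rTensor (Podd K) (LinearMap.mulLeft (R K) (MvPolynomial.X a))) u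
theorem mX_zero : mX K a (0 : SuperSpace K) = 0 := by rw [mX_def]; exact map_zero _
theorem mX_smul : mX K a (c • u) = c • mX K a u := by rw [mX_def]; exact LinearMap.map_smul_of_tower _ _ _
theorem mX_Hh : mX K a (Hh K u) = Hh K (mX K a u) := by rw [mX_def]; exact map_smul _ _ _

theorem dT_add : dT K a (u + w) = dT K a u + dT K a w := by rw [dT_def]; exact map_add _ _ _
theorem dT_sub : dT K a (u - w) = dT K a u - dT K a w := by rw [dT_def, sub_eq_add_neg, sub_eq_add_neg, map_add, map_neg]
theorem dT_neg : dT K a (-u) = -dT K a u := by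
  refine (eq_neg_iff_add_eq_zero (a := dT K a (-u)) (b := dT K a u)).mpr ?_
  rw [← dT_add, neg_add_cancel u, dT_def, map_zero]
theorem dT_zero : dT K a (0 : SuperSpace K) = 0 := by rw [dT_def]; exact map_zero _
theorem dT_smul : dT K a (c • u) = c • dT K a u := by rw [dT_def]; exact LinearMap.map_smul_of_tower _ _ _
theorem dT_Hh : dT K a (Hh K u) = Hh K (dT K a u) := by rw [dT_def]; exact map_smul _ _ _

theorem mT_add : mT K a (u + w) = mT K a u + mT K a w := by rw [mT_def]; exact map_add _ _ _
theorem mT_sub : mT K a (u - w) = mT K a u - mT K a w := by rw [mT_def]; exact map_sub (LinearMap.lTensor (Pev K) (LinearMap.mulLeft (R K) (thetaGen K a))) u w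
theorem mT_neg : mT K a (-u) = -mT K a u := by rw [mT_def]; exact map_neg (LinearMap.lTensor (Pev K) (LinearMap.mulLeft (R K) (thetaGen K a))) u
theorem mT_zero : mT K a (0 : SuperSpace K) = 0 := by rw [mT_def]; exact map_zero _
theorem mT_smul : mT K a (c • u) = c • mT K a u := by rw [mT_def]; exact LinearMap.map_smul_of_tower _ _ _
theorem mT_Hh : mT K a (Hh K u) = Hh K (mT K a u) := by rw [mT_def]; exact map_smul _ _ _

end Lin

end St11

namespace St11Comm
open St11
variable {K : Type} [Field K] [CharZero K]
section Comm
variable (a b : Fin 3) (v : SuperSpace K)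

theorem rT_rT (f g : Pev K →ₗ[R K] Pev K) :
    LinearMap.rTensor (Podd K) f (LinearMap.rTensor (Podd K) g v) =
      LinearMap.rTensor (Podd K) (f ∘ₗ g) v := by
  rw [LinearMap.rTensor_comp]; rfl

theorem lT_lT (f g : Podd K →ₗ[R K] Podd K) :
    LinearMap.lTensor (Pev K) f (LinearMap.lTensor (Pev K) g v) =
      LinearMap.lTensor (Pev K) (f ∘ₗ g) v := by
  rw [LinearMap.lTensor_comp]; rfl

theorem rT_lT (f : Pev K →ₗ[R K] Pev K) (g : Podd K →ₗ[R K] Podd K) :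
    LinearMap.rTensor (Podd K) f (LinearMap.lTensor (Pev K) g v) =
      LinearMap.lTensor (Pev K) g (LinearMap.rTensor (Podd K) f v) := by
  rw [← LinearMap.comp_apply, ← LinearMap.comp_apply,
    LinearMap.rTensor_comp_lTensor, LinearMap.lTensor_comp_rTensor]

/-- `[∂ᵢ, xⱼ] = δᵢⱼ` on the polynomial factor. -/
theorem pd_ml (p : Pev K) :
    MvPolynomial.pderiv a (MvPolynomial.X b * p) =
      MvPolynomial.X b * MvPolynomial.pderiv a p + if a = b then p else 0 := by
  rw [MvPolynomial.pderiv_mul, MvPolynomial.pderiv_X]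
  rcases eq_or_ne a b with h | h
  · simp [h, Pi.single_apply, add_comm]
  · simp [h, Pi.single_apply, (Ne.symm h)]

theorem dX_mX : dX K a (mX K b v) = mX K b (dX K a v) + if a = b then v else 0 := by
  rw [dX_def, mX_def, rT_rT]
  have : ((MvPolynomial.pderiv a).toLinearMap ∘ₗ LinearMap.mulLeft (R K) (MvPolynomial.X b))
      = LinearMap.mulLeft (R K) (MvPolynomial.X b) ∘ₗ (MvPolynomial.pderiv a).toLinearMap
        + if a = b then LinearMap.id else 0 := by
    ext p
    simp only [LinearMap.comp_apply, LinearMap.mulLeft_apply, LinearMap.add_apply,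
      Derivation.coeFn_coe]
    rw [pd_ml]
    split_ifs <;> simp
  rw [this, LinearMap.rTensor_add, LinearMap.add_apply, ← rT_rT]
  congr 1
  split_ifs with h
  · simp [LinearMap.rTensor_id]
  · simp [LinearMap.rTensor_zero]

/-- `∂ᵢ∂ⱼ = ∂ⱼ∂ᵢ` -/
theorem dX_dX : dX K a (dX K b v) = dX K b (dX K a v) := by
  simp only [dX_def]
  rw [rT_rT, rT_rT]
  have : ((MvPolynomial.pderiv a).toLinearMap ∘ₗ (MvPolynomial.pderiv b).toLinearMap
      : Pev K →ₗ[R K] Pev K)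
      = (MvPolynomial.pderiv b).toLinearMap ∘ₗ (MvPolynomial.pderiv a).toLinearMap :=
    LinearMap.ext fun p => pderiv_comm' a b p
  rw [this]

theorem mX_mX : mX K a (mX K b v) = mX K b (mX K a v) := by
  simp only [mX_def]
  rw [rT_rT, rT_rT, ← LinearMap.mulLeft_mul, ← LinearMap.mulLeft_mul, mul_comm]

theorem dX_mT : dX K a (mT K b v) = mT K b (dX K a v) := by
  rw [dX_def, mT_def]; exact rT_lT v _ _

theorem dX_dT : dX K a (dT K b v) = dT K b (dX K a v) := by
  rw [dX_def, dT_def]; exact rT_lT v _ _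

theorem mX_mT : mT K a (mX K b v) = mX K b (mT K a v) := by
  rw [mX_def, mT_def]; exact (rT_lT v _ _).symm

theorem mX_dT : dT K a (mX K b v) = mX K b (dT K a v) := by
  rw [mX_def, dT_def]; exact (rT_lT v _ _).symm

theorem dT_mT : dT K a (mT K b v) = (if b = a then v else 0) - mT K b (dT K a v) := by
  rw [dT_def, mT_def, lT_lT]
  have : (CliffordAlgebra.contractLeft (Finsupp.lapply a)
        ∘ₗ LinearMap.mulLeft (R K) (thetaGen K b) : Podd K →ₗ[R K] Podd K)
      = (if b = a then LinearMap.id else 0)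
        - LinearMap.mulLeft (R K) (thetaGen K b) ∘ₗ
            CliffordAlgebra.contractLeft (Finsupp.lapply a) := by
    refine LinearMap.ext fun x => ?_
    try simp only [LinearMap.comp_apply, LinearMap.mulLeft_apply, LinearMap.sub_apply,
      LinearMap.add_apply, LinearMap.id_coe, id_eq]
    rw [thetaGen, show (ExteriorAlgebra.ι (R K) : (Fin 3 →₀ R K) →ₗ[R K] Podd K)
      = CliffordAlgebra.ι 0 from rfl]
    rw [CliffordAlgebra.contractLeft_ι_mul]
    simp only [Finsupp.lapply_apply, Finsupp.single_apply]
    split_ifs <;> first | simp | rfl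
  rw [this, LinearMap.lTensor_sub]
  refine (show _ = LinearMap.lTensor (Pev K) (if b = a then LinearMap.id else 0) v - LinearMap.lTensor (Pev K) (LinearMap.mulLeft (R K) (thetaGen K b) ∘ₗ CliffordAlgebra.contractLeft (Finsupp.lapply a)) v from rfl).trans ?_
  rw [← lT_lT]
  congr 1
  split_ifs with h
  · simp [LinearMap.lTensor_id]
  · simp [LinearMap.lTensor_zero]

theorem dT_dT : dT K a (dT K b v) = -dT K b (dT K a v) := by
  refine (eq_neg_iff_add_eq_zero (a := dT K a (dT K b v)) (b := dT K b (dT K a v))).mpr ?_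
  simp only [dT_def]
  rw [lT_lT, lT_lT, ← LinearMap.add_apply, ← LinearMap.lTensor_add]
  have : (CliffordAlgebra.contractLeft (Finsupp.lapply a)
          ∘ₗ CliffordAlgebra.contractLeft (Finsupp.lapply b)
      + CliffordAlgebra.contractLeft (Finsupp.lapply b)
          ∘ₗ CliffordAlgebra.contractLeft (Finsupp.lapply a) : Podd K →ₗ[R K] Podd K) = 0 :=
    LinearMap.ext fun x => by
      simp only [LinearMap.add_apply, LinearMap.comp_apply, LinearMap.zero_apply]
      rw [CliffordAlgebra.contractLeft_comm, neg_add_cancel]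
  rw [this, LinearMap.lTensor_zero]; rfl

theorem dT_dT_self : dT K a (dT K a v) = 0 := by
  simp only [dT_def]
  rw [lT_lT]
  have : (CliffordAlgebra.contractLeft (Finsupp.lapply a)
        ∘ₗ CliffordAlgebra.contractLeft (Finsupp.lapply a) : Podd K →ₗ[R K] Podd K) = 0 :=
    LinearMap.ext fun x => CliffordAlgebra.contractLeft_contractLeft _ x
  rw [this, LinearMap.lTensor_zero]; rfl

theorem mT_mT : mT K a (mT K b v) = -mT K b (mT K a v) := by
  refine (eq_neg_iff_add_eq_zero (a := mT K a (mT K b v)) (b := mT K b (mT K a v))).mpr ?_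
  simp only [mT_def]
  rw [lT_lT, lT_lT, ← LinearMap.add_apply, ← LinearMap.lTensor_add]
  have : (LinearMap.mulLeft (R K) (thetaGen K a) ∘ₗ LinearMap.mulLeft (R K) (thetaGen K b)
      + LinearMap.mulLeft (R K) (thetaGen K b) ∘ₗ LinearMap.mulLeft (R K) (thetaGen K a)
      : Podd K →ₗ[R K] Podd K) = 0 :=
    LinearMap.ext fun x => by
      simp only [LinearMap.add_apply, LinearMap.comp_apply, LinearMap.mulLeft_apply,
        LinearMap.zero_apply, ← mul_assoc, ← add_mul]
      rw [thetaGen, thetaGen, ExteriorAlgebra.ι_add_mul_swap, zero_mul]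
  rw [this, LinearMap.lTensor_zero]; rfl

theorem mT_mT_self : mT K a (mT K a v) = 0 := by
  simp only [mT_def]
  rw [lT_lT, ← LinearMap.mulLeft_mul]
  have : thetaGen K a * thetaGen K a = 0 := ExteriorAlgebra.ι_sq_zero _
  rw [this, LinearMap.mulLeft_zero_eq_zero, LinearMap.lTensor_zero]; rfl

end Comm
end St11Comm

namespace St11Inst
open St11 St11Comm
variable {K : Type} [Field K] [CharZero K]
variable (v : SuperSpace K)

theorem dX_mX_same (a : Fin 3) : dX K a (mX K a v) = mX K a (dX K a v) + v := by
  simpa using dX_mX a a v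
theorem dT_mT_same (a : Fin 3) : dT K a (mT K a v) = v - mT K a (dT K a v) := by
  simpa using dT_mT a a v

theorem dX0_mX1 : dX K 0 (mX K 1 v) = mX K 1 (dX K 0 v) := by simpa using dX_mX 0 1 v
theorem dX0_mX2 : dX K 0 (mX K 2 v) = mX K 2 (dX K 0 v) := by simpa using dX_mX 0 2 v
theorem dX1_mX0 : dX K 1 (mX K 0 v) = mX K 0 (dX K 1 v) := by simpa using dX_mX 1 0 v
theorem dX1_mX2 : dX K 1 (mX K 2 v) = mX K 2 (dX K 1 v) := by simpa using dX_mX 1 2 v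
theorem dX2_mX0 : dX K 2 (mX K 0 v) = mX K 0 (dX K 2 v) := by simpa using dX_mX 2 0 v
theorem dX2_mX1 : dX K 2 (mX K 1 v) = mX K 1 (dX K 2 v) := by simpa using dX_mX 2 1 v

theorem dT0_mT1 : dT K 0 (mT K 1 v) = -mT K 1 (dT K 0 v) := by have h := dT_mT 0 1 v; simp at h; exact h.trans (zero_sub (mT K 1 (dT K 0 v)))
theorem dT0_mT2 : dT K 0 (mT K 2 v) = -mT K 2 (dT K 0 v) := by have h := dT_mT 0 2 v; simp at h; exact h.trans (zero_sub (mT K 2 (dT K 0 v)))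
theorem dT1_mT0 : dT K 1 (mT K 0 v) = -mT K 0 (dT K 1 v) := by have h := dT_mT 1 0 v; simp at h; exact h.trans (zero_sub (mT K 0 (dT K 1 v)))
theorem dT1_mT2 : dT K 1 (mT K 2 v) = -mT K 2 (dT K 1 v) := by have h := dT_mT 1 2 v; simp at h; exact h.trans (zero_sub (mT K 2 (dT K 1 v)))
theorem dT2_mT0 : dT K 2 (mT K 0 v) = -mT K 0 (dT K 2 v) := by have h := dT_mT 2 0 v; simp at h; exact h.trans (zero_sub (mT K 0 (dT K 2 v)))
theorem dT2_mT1 : dT K 2 (mT K 1 v) = -mT K 1 (dT K 2 v) := by have h := dT_mT 2 1 v; simp at h; exact h.trans (zero_sub (mT K 1 (dT K 2 v)))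

theorem dX1_dX0 : dX K 1 (dX K 0 v) = dX K 0 (dX K 1 v) := dX_dX _ _ v
theorem dX2_dX0 : dX K 2 (dX K 0 v) = dX K 0 (dX K 2 v) := dX_dX _ _ v
theorem dX2_dX1 : dX K 2 (dX K 1 v) = dX K 1 (dX K 2 v) := dX_dX _ _ v
theorem mX1_mX0 : mX K 1 (mX K 0 v) = mX K 0 (mX K 1 v) := mX_mX _ _ v
theorem mX2_mX0 : mX K 2 (mX K 0 v) = mX K 0 (mX K 2 v) := mX_mX _ _ v
theorem mX2_mX1 : mX K 2 (mX K 1 v) = mX K 1 (mX K 2 v) := mX_mX _ _ v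

theorem dT1_dT0 : dT K 1 (dT K 0 v) = -dT K 0 (dT K 1 v) := dT_dT _ _ v
theorem dT2_dT0 : dT K 2 (dT K 0 v) = -dT K 0 (dT K 2 v) := dT_dT _ _ v
theorem dT2_dT1 : dT K 2 (dT K 1 v) = -dT K 1 (dT K 2 v) := dT_dT _ _ v
theorem mT1_mT0 : mT K 1 (mT K 0 v) = -mT K 0 (mT K 1 v) := mT_mT _ _ v
theorem mT2_mT0 : mT K 2 (mT K 0 v) = -mT K 0 (mT K 2 v) := mT_mT _ _ v
theorem mT2_mT1 : mT K 2 (mT K 1 v) = -mT K 1 (mT K 2 v) := mT_mT _ _ v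

end St11Inst


set_option maxHeartbeats 10000000


/-- Under `(l₋, l₀, l₊, q₋, q₊) ↦ (L₁, L₂, L₃, G₁, G₂)`, the operators
form a quadratic super quantum Airy structure representation of `osp(1|2)` rescaled by `ℏ`:
`[L₂,L₁] = −ℏL₁`, `[L₂,L₃] = ℏL₃`, `[L₃,L₁] = 2ℏL₂`, `[L₂,G₁] = −(ℏ/2)G₁`,
`[L₂,G₂] = (ℏ/2)G₂`, `[L₃,G₁] = ℏG₂`, `[L₁,G₂] = ℏG₁`, `[L₁,G₁] = 0`, `[L₃,G₂] = 0`,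
`{G₁,G₁} = −ℏL₁`, `{G₂,G₂} = ℏL₃`, `{G₁,G₂} = −ℏL₂`. -/
theorem statement11 (h3 : s3 ^ 2 = 3) :
    (∀ v, L2 K (L1 K s3 v) - L1 K s3 (L2 K v) = -(hb K • L1 K s3 v)) ∧
    (∀ v, L2 K (L3 K s3 v) - L3 K s3 (L2 K v) = hb K • L3 K s3 v) ∧
    (∀ v, L3 K s3 (L1 K s3 v) - L1 K s3 (L3 K s3 v) = (2 * hb K) • L2 K v) ∧
    (∀ v, L2 K (G1 K s3 v) - G1 K s3 (L2 K v) = -((cs K (1/2) * hb K) • G1 K s3 v)) ∧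
    (∀ v, L2 K (G2 K s3 v) - G2 K s3 (L2 K v) = (cs K (1/2) * hb K) • G2 K s3 v) ∧
    (∀ v, L3 K s3 (G1 K s3 v) - G1 K s3 (L3 K s3 v) = hb K • G2 K s3 v) ∧
    (∀ v, L1 K s3 (G2 K s3 v) - G2 K s3 (L1 K s3 v) = hb K • G1 K s3 v) ∧
    (∀ v, L1 K s3 (G1 K s3 v) - G1 K s3 (L1 K s3 v) = 0) ∧
    (∀ v, L3 K s3 (G2 K s3 v) - G2 K s3 (L3 K s3 v) = 0) ∧
    (∀ v, G1 K s3 (G1 K s3 v) + G1 K s3 (G1 K s3 v) = -(hb K • L1 K s3 v)) ∧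
    (∀ v, G2 K s3 (G2 K s3 v) + G2 K s3 (G2 K s3 v) = hb K • L3 K s3 v) ∧
    (∀ v, G1 K s3 (G2 K s3 v) + G2 K s3 (G1 K s3 v) = -(hb K • L2 K v)) := by
  refine ⟨?_, ?_, ?_, ?_, ?_, ?_, ?_, ?_, ?_, ?_, ?_, ?_⟩ <;>
    intro v <;>
    simp only [L1, L2, L3, G1, G2] <;>
    simp only [St11.cs_hb_smul, St11.cs_hb2_smul, St11.twelve_smul, St11.two_hb_smul,
      St11.four_hb_smul, St11.five_hb_smul, St11.hb_smul, St11.csmul] <;>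
    simp only [St11.Hh_add, St11.Hh_sub, St11.Hh_neg, St11.Hh_zero, St11.Hh_smul,
      St11.dX_add, St11.dX_sub, St11.dX_neg, St11.dX_zero, St11.dX_smul, St11.dX_Hh,
      St11.mX_add, St11.mX_sub, St11.mX_neg, St11.mX_zero, St11.mX_smul, St11.mX_Hh,
      St11.dT_add, St11.dT_sub, St11.dT_neg, St11.dT_zero, St11.dT_smul, St11.dT_Hh,
      St11.mT_add, St11.mT_sub, St11.mT_neg, St11.mT_zero, St11.mT_smul, St11.mT_Hh,
      St11Comm.dX_mT, St11Comm.dX_dT, St11Comm.mX_mT, St11Comm.mX_dT,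
      St11Inst.dX_mX_same, St11Inst.dT_mT_same,
      St11Inst.dX0_mX1, St11Inst.dX0_mX2, St11Inst.dX1_mX0, St11Inst.dX1_mX2,
      St11Inst.dX2_mX0, St11Inst.dX2_mX1,
      St11Inst.dT0_mT1, St11Inst.dT0_mT2, St11Inst.dT1_mT0, St11Inst.dT1_mT2,
      St11Inst.dT2_mT0, St11Inst.dT2_mT1,
      St11Inst.dX1_dX0, St11Inst.dX2_dX0, St11Inst.dX2_dX1,
      St11Inst.mX1_mX0, St11Inst.mX2_mX0, St11Inst.mX2_mX1,
      St11Inst.dT1_dT0, St11Inst.dT2_dT0, St11Inst.dT2_dT1,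
      St11Inst.mT1_mT0, St11Inst.mT2_mT0, St11Inst.mT2_mT1,
      St11Comm.dT_dT_self, St11Comm.mT_mT_self,
      smul_add, smul_sub, smul_neg, smul_zero, smul_smul, add_zero, zero_add, neg_neg] <;>
    match_scalars <;> (try ring_nf) <;> (try simp only [h3]) <;> (try ring_nf) <;> (try norm_num)

end
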